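/- arXiv:1710.02230 — 2 statements merged into one kernel-verified Lean document; each statement's English description precedes it below -/
import Mathlib

section
/- Under the assumptions of (i) Ext^i_A(T, X) = 0 for all i > n and all X ∈ A, and (ii) Ext^i_A(T, T^{(I)}) = 0 for all i > 0 and all sets I, in an abelian category A with exact coproducts, the intersection L_m ∩ E equals Add(T) for every m ≥ 0, where L_m is the class of objects with an Add(T)-coresolution of length m and E = {E : Ext^i_A(T,E)=0 for all i>0}. -/
open CategoryTheory Limits

universe w v u

/-- `X` is a direct summand of a coproduct of copies of `T`. -/
def InAdd {A : Type u} [Category.{v} A] [Abelian A] [HasCoproducts.{v} A]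
    (T X : A) : Prop :=
  ∃ (ι : Type v) (Y : A), Nonempty ((X ⊞ Y) ≅ ∐ (fun _ : ι => T))

/-- `L ∈ L_m`: there is an exact sequence `0 → L → T^0 → ⋯ → T^m → 0` with all
`T^j ∈ Add(T)` (encoded by an `ℕ`-indexed sequence vanishing in degrees `> m`). -/
def InLm {A : Type u} [Category.{v} A] [Abelian A] [HasCoproducts.{v} A]
    (T : A) (m : ℕ) (L : A) : Prop :=
  ∃ (E : ℕ → A) (f : L ⟶ E 0) (d : ∀ i : ℕ, E i ⟶ E (i + 1))
    (hw0 : f ≫ d 0 = 0) (hw : ∀ i : ℕ, d i ≫ d (i + 1) = 0),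
    (∀ i : ℕ, i ≤ m → InAdd T (E i)) ∧
    (∀ i : ℕ, m < i → IsZero (E i)) ∧
    Mono f ∧
    (ShortComplex.mk f (d 0) hw0).Exact ∧
    (∀ i : ℕ, (ShortComplex.mk (d i) (d (i + 1)) (hw i)).Exact)

/-!
Induct on the length `m` of the coresolution. Cutting `0 → X → T⁰ → K → 0` off a coresolution
of `X ∈ L_{m+1} ∩ E`, the long exact sequence of `Ext(T, -)` puts `K` in `L_m ∩ E`, hence in
`Add(T)`. As `Ext¹(T, X) = 0`, morphisms from `T`, and therefore from any object of `Add(T)`,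
lift along `T⁰ → K`; so the sequence splits and `X` is a summand of `T⁰`. Conversely, condition
(ii) passes from coproducts of copies of `T` to their retracts, which gives `Add(T) ⊆ E`.
-/

section Ext

open Abelian

variable {C : Type u} [Category.{v} C] [Abelian C] [HasExt.{w} C]

lemma CategoryTheory.Abelian.Ext.subsingleton_of_retract {X Y : C} (h : Retract X Y) (Z : C)
    (i : ℕ) [Subsingleton (Ext Z Y i)] : Subsingleton (Ext Z X i) :=
  Function.Injective.subsingleton (f := fun c : Ext Z X i => c.comp (Ext.mk₀ h.i) (add_zero i))
    (Function.LeftInverse.injective (g := fun c => c.comp (Ext.mk₀ h.r) (add_zero i)) fun c => by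
      simp [Ext.comp_assoc_of_second_deg_zero])

namespace CategoryTheory.ShortComplex.ShortExact

variable {S : ShortComplex C} (hS : S.ShortExact)
include hS

lemma subsingleton_ext_X₃ (Z : C) (i : ℕ) [Subsingleton (Ext Z S.X₂ i)]
    [Subsingleton (Ext Z S.X₁ (i + 1))] : Subsingleton (Ext Z S.X₃ i) := by
  refine subsingleton_of_forall_eq 0 fun x₃ => ?_
  obtain ⟨x₂, rfl⟩ := Ext.covariant_sequence_exact₃ Z hS x₃ rfl (Subsingleton.elim _ _)
  rw [Subsingleton.elim x₂ 0, Ext.zero_comp]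

lemma exists_lift_of_subsingleton_ext {P : C} [Subsingleton (Ext P S.X₁ 1)] (g : P ⟶ S.X₃) :
    ∃ l : P ⟶ S.X₂, l ≫ S.g = g := by
  obtain ⟨x₂, hx₂⟩ :=
    Ext.covariant_sequence_exact₃ P hS (Ext.mk₀ g) (zero_add 1) (Subsingleton.elim _ _)
  obtain ⟨l, rfl⟩ := Ext.addEquiv₀.symm.surjective x₂
  exact ⟨l, (Ext.mk₀_bijective P S.X₃).1 (by simpa using hx₂)⟩

end CategoryTheory.ShortComplex.ShortExact

end Ext

namespace InAdd

variable {A : Type u} [Category.{v} A] [Abelian A] [HasCoproducts.{v} A] {T X Y : A}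

lemma of_iso (h : InAdd T X) (e : Y ≅ X) : InAdd T Y := by
  obtain ⟨ι, W, ⟨eX⟩⟩ := h
  exact ⟨ι, W, ⟨biprod.mapIso e (Iso.refl W) ≪≫ eX⟩⟩

lemma of_biprod_iso {Z : A} (h : InAdd T Y) (e : X ⊞ Z ≅ Y) : InAdd T X := by
  obtain ⟨ι, W, ⟨eY⟩⟩ := h
  exact ⟨ι, Z ⊞ W, ⟨(biprod.associator X Z W).symm ≪≫ biprod.mapIso e (Iso.refl W) ≪≫ eY⟩⟩

lemma of_isZero (hX : IsZero X) : InAdd T X := by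
  refine ⟨PUnit, T, ⟨?_ ≪≫ (coproductUniqueIso (fun _ : PUnit.{v + 1} => T)).symm⟩⟩
  exact ⟨biprod.snd, biprod.inr, biprod.hom_ext _ _ (hX.eq_of_tgt _ _) (by simp), by simp⟩

lemma exists_retract (h : InAdd T X) : ∃ ι : Type v, Nonempty (Retract X (∐ fun _ : ι => T)) := by
  obtain ⟨ι, W, ⟨e⟩⟩ := h
  exact ⟨ι, ⟨(Retract.mk biprod.inl biprod.fst).trans (Retract.ofIso e)⟩⟩

lemma exists_lift {E B : A} {p : E ⟶ B} (hT : ∀ g : T ⟶ B, ∃ l : T ⟶ E, l ≫ p = g)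
    (hX : InAdd T X) (g : X ⟶ B) : ∃ l : X ⟶ E, l ≫ p = g := by
  obtain ⟨ι, ⟨h⟩⟩ := hX.exists_retract
  choose lift hlift using fun j : ι => hT (Sigma.ι (fun _ => T) j ≫ h.r ≫ g)
  refine ⟨h.i ≫ Sigma.desc lift, ?_⟩
  have hdesc : Sigma.desc lift ≫ p = h.r ≫ g := Sigma.hom_ext _ _ fun j => by simp [hlift]
  rw [Category.assoc, hdesc, h.retract_assoc]

variable [HasExt.{w} A]

lemma subsingleton_ext
    (hii : ∀ (I : Type v) (i : ℕ), 0 < i →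
      Subsingleton (Abelian.Ext T (∐ (fun _ : I => T)) i))
    (hX : InAdd T X) (i : ℕ) (hi : 0 < i) : Subsingleton (Abelian.Ext T X i) := by
  obtain ⟨ι, ⟨h⟩⟩ := hX.exists_retract
  have := hii ι i hi
  exact Abelian.Ext.subsingleton_of_retract h T i

end InAdd

section AddT

variable {A : Type u} [Category.{v} A] [Abelian A] [HasCoproducts.{v} A] {T X : A}

lemma CategoryTheory.ShortComplex.ShortExact.inAdd_X₁ [HasExt.{w} A] {S : ShortComplex A}
    (hS : S.ShortExact) [Subsingleton (Abelian.Ext T S.X₁ 1)] (h₂ : InAdd T S.X₂)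
    (h₃ : InAdd T S.X₃) : InAdd T S.X₁ := by
  obtain ⟨s, hs⟩ := h₃.exists_lift hS.exists_lift_of_subsingleton_ext (𝟙 S.X₃)
  exact h₂.of_biprod_iso
    (ShortComplex.Splitting.ofExactOfSection S hS.exact s hs hS.mono_f).isoBinaryBiproduct.symm

open ZeroObject in
lemma InAdd.inLm (hX : InAdd T X) (m : ℕ) : InLm T m X := by
  refine ⟨fun i => Nat.casesOn i X fun _ => 0, 𝟙 X, fun _ => 0, by simp, by simp,
    ?_, ?_, inferInstance, (ShortComplex.exact_iff_epi _ rfl).2 inferInstance,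
    fun _ => ShortComplex.exact_of_isZero_X₂ _ (isZero_zero A)⟩
  · rintro (_ | _) _
    exacts [hX, InAdd.of_isZero (isZero_zero A)]
  · rintro (_ | _) hi
    exacts [absurd hi (Nat.not_lt_zero m), isZero_zero A]

namespace InLm

lemma inAdd_of_zero (h : InLm T 0 X) : InAdd T X := by
  obtain ⟨E, f, d, hw0, -, hAdd, hZero, hf, hex0, -⟩ := h
  have : Epi f := (ShortComplex.exact_iff_epi _ ((hZero 1 one_pos).eq_of_tgt _ _)).1 hex0
  have : IsIso f := isIso_of_mono_of_epi f
  exact (hAdd 0 le_rfl).of_iso (asIso f)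

lemma exists_shortExact_of_succ {m : ℕ} (h : InLm T (m + 1) X) :
    ∃ (E₀ K : A) (f : X ⟶ E₀) (g : E₀ ⟶ K) (w : f ≫ g = 0),
      (ShortComplex.mk f g w).ShortExact ∧ InAdd T E₀ ∧ InLm T m K := by
  obtain ⟨E, f, d, hw0, hw, hAdd, hZero, hf, hex0, hex⟩ := h
  let f' : cokernel f ⟶ E 1 := cokernel.desc f (d 0) hw0
  have hπf' : cokernel.π f ≫ f' = d 0 := cokernel.π_desc _ _ _
  have hw0' : f' ≫ d 1 = 0 := by
    rw [← cancel_epi (cokernel.π f), reassoc_of% hπf', hw 0, comp_zero]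
  have hex0' : (ShortComplex.mk f' (d 1) hw0').Exact :=
    (ShortComplex.exact_iff_of_epi_of_isIso_of_mono
      (S₁ := ShortComplex.mk (d 0) (d 1) (hw 0)) (S₂ := ShortComplex.mk f' (d 1) hw0')
      ⟨cokernel.π f, 𝟙 _, 𝟙 _, by simp [hπf'], by simp⟩).1 (hex 0)
  refine ⟨E 0, cokernel f, f, cokernel.π f, cokernel.condition f,
    .mk' (ShortComplex.exact_of_g_is_cokernel _ (cokernelIsCokernel f)) hf coequalizer.π_epi,
    hAdd 0 (Nat.zero_le _), fun i => E (i + 1), f', fun i => d (i + 1), hw0', fun i => hw (i + 1),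
    fun i hi => hAdd (i + 1) (by omega), fun i hi => hZero (i + 1) (by omega),
    (ShortComplex.exact_iff_mono_cokernel_desc (ShortComplex.mk f (d 0) hw0)).1 hex0,
    hex0', fun i => hex (i + 1)⟩

variable [HasExt.{w} A]

lemma inAdd_of_subsingleton_ext
    (hii : ∀ (I : Type v) (i : ℕ), 0 < i →
      Subsingleton (Abelian.Ext T (∐ (fun _ : I => T)) i)) {m : ℕ} (h : InLm T m X)
    (hX : ∀ i : ℕ, 0 < i → Subsingleton (Abelian.Ext T X i)) : InAdd T X := by
  induction m generalizing X with
  | zero => exact h.inAdd_of_zero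
  | succ m ih =>
    obtain ⟨E₀, K, f, g, w, hS, hE₀, hK⟩ := h.exists_shortExact_of_succ
    have hK' : ∀ i : ℕ, 0 < i → Subsingleton (Abelian.Ext T K i) := fun i hi =>
      have := hE₀.subsingleton_ext hii i hi
      have := hX (i + 1) i.succ_pos
      hS.subsingleton_ext_X₃ T i
    have := hX 1 one_pos
    exact hS.inAdd_X₁ hE₀ (ih hK hK')

end InLm

end AddT

theorem statement5_general (A : Type u) [Category.{v} A] [Abelian A]
    [HasCoproducts.{v} A] [HasExt.{w} A]
    (T : A)
    (hii : ∀ (I : Type v) (i : ℕ), 0 < i →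
      Subsingleton (Abelian.Ext T (∐ (fun _ : I => T)) i))
    (m : ℕ) (X : A) :
    (InLm T m X ∧ (∀ i : ℕ, 0 < i → Subsingleton (Abelian.Ext T X i))) ↔
      InAdd T X :=
  ⟨fun ⟨hL, hE⟩ => hL.inAdd_of_subsingleton_ext hii hE,
    fun hX => ⟨hX.inLm m, fun i hi => hX.subsingleton_ext hii i hi⟩⟩

/-- under conditions (i) and (ii) on `T` in an abelian category with
exact coproducts, for every `m ≥ 0` the intersection `L_m ∩ E` equals `Add(T)`,
where `E = {E : Ext^i(T,E) = 0 for all i > 0}`. -/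
theorem statement5 (A : Type u) [Category.{v} A] [Abelian A]
    [HasCoproducts.{v} A] [AB4 A] [HasExt.{w} A]
    (T : A) (n : ℕ)
    (hi : ∀ (i : ℕ), n < i → ∀ X : A, Subsingleton (Abelian.Ext T X i))
    (hii : ∀ (I : Type v) (i : ℕ), 0 < i →
      Subsingleton (Abelian.Ext T (∐ (fun _ : I => T)) i))
    (m : ℕ) (X : A) :
    (InLm T m X ∧ (∀ i : ℕ, 0 < i → Subsingleton (Abelian.Ext T X i))) ↔
      InAdd T X :=
  statement5_general A T hii m X
end

section
/- In a cocomplete abelian category C, the class of weakly λ-generated objects is closed under quotient objects, extensions, and coproducts of fewer than λ objects, where λ is a regular cardinal. -/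
/-!
Factoring `g : B ⟶ ∐ D` through the subcoproduct over `Z` is detected by the idempotent
`π_Z ≫ ι_Z` of `∐ D` that kills the summands outside `Z`: `g` factors iff `g ≫ π_Z ≫ ι_Z = g`;
in particular an epimorphism can be cancelled. For an extension `0 → B₁ → B₂ → B₃ → 0` and
`u : B₂ ⟶ ∐ D`, the restriction of `u` to `B₁` factors through some small `Z₁`, so
`u - u ≫ π_{Z₁} ≫ ι_{Z₁}` vanishes on `B₁` and descends to `B₃`, where it factors through some
small `Z₃`; then `u` factors through `Z₁ ∪ Z₃`. For a coproduct of fewer than `κ` objects, the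
union of the index sets that serve the summands is still small because `κ` is regular.
-/

open CategoryTheory Limits

universe v u

variable {C : Type u} [Category.{v} C]

/-- An object `B` is weakly `κ`-generated if every morphism from `B` into a
coproduct factors through the subcoproduct over some subset of the index
of cardinality smaller than `κ`. -/
def WeaklyGen [HasColimits C] (κ : Cardinal.{v}) (B : C) : Prop :=
  ∀ (X : Type v) (D : X → C) (g : B ⟶ ∐ D),
    ∃ Z : Set X, Cardinal.mk Z < κ ∧
      ∃ h : B ⟶ ∐ (fun z : Z => D z.1),
        h ≫ Sigma.desc (fun z : Z => Sigma.ι D z.1) = g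

section Subcoproduct

variable [HasColimits C] {X : Type v} (D : X → C)

noncomputable def subcoproductι (Z : Set X) : (∐ fun z : Z => D z) ⟶ ∐ D :=
  Sigma.desc fun z => Sigma.ι D z

open scoped Classical in
noncomputable def subcoproductπ [HasZeroMorphisms C] (Z : Set X) :
    ∐ D ⟶ ∐ fun z : Z => D z :=
  Sigma.desc fun x => if h : x ∈ Z then Sigma.ι (fun z : Z => D z) ⟨x, h⟩ else 0

@[simp]
lemma subcoproductι_π [HasZeroMorphisms C] (Z : Set X) :
    subcoproductι D Z ≫ subcoproductπ D Z = 𝟙 _ := by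
  ext ⟨z, hz⟩
  simp [subcoproductι, subcoproductπ, dif_pos hz]

variable {D}

-- `WeaklyGen κ B` says that every `g` satisfies this predicate for some `Z` with `#Z < κ`.
def FactorsThroughSubcoproduct {B : C} (g : B ⟶ ∐ D) (Z : Set X) : Prop :=
  ∃ h : B ⟶ ∐ fun z : Z => D z, h ≫ subcoproductι D Z = g

lemma factorsThroughSubcoproduct_iff [HasZeroMorphisms C] {B : C} (g : B ⟶ ∐ D) (Z : Set X) :
    FactorsThroughSubcoproduct g Z ↔ g ≫ subcoproductπ D Z ≫ subcoproductι D Z = g := by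
  constructor
  · rintro ⟨h, rfl⟩
    rw [Category.assoc, reassoc_of% (subcoproductι_π D Z)]
  · intro hg
    exact ⟨g ≫ subcoproductπ D Z, by rw [Category.assoc, hg]⟩

namespace FactorsThroughSubcoproduct

variable {B : C} {g : B ⟶ ∐ D} {Z : Set X}

lemma comp {A : C} (f : A ⟶ B) (hg : FactorsThroughSubcoproduct g Z) :
    FactorsThroughSubcoproduct (f ≫ g) Z := by
  obtain ⟨h, rfl⟩ := hg
  exact ⟨f ≫ h, Category.assoc _ _ _⟩

lemma of_epi_comp [HasZeroMorphisms C] {A : C} (p : A ⟶ B) [Epi p]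
    (hg : FactorsThroughSubcoproduct (p ≫ g) Z) : FactorsThroughSubcoproduct g Z := by
  rw [factorsThroughSubcoproduct_iff] at hg ⊢
  exact (cancel_epi p).mp (by simpa only [Category.assoc] using hg)

lemma mono {W : Set X} (hg : FactorsThroughSubcoproduct g Z) (hZW : Z ⊆ W) :
    FactorsThroughSubcoproduct g W := by
  obtain ⟨h, rfl⟩ := hg
  refine ⟨h ≫ Sigma.desc fun z : Z => Sigma.ι (fun w : W => D w) ⟨z, hZW z.2⟩, ?_⟩
  rw [Category.assoc]
  congr 1
  ext
  simp [subcoproductι]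

lemma add [Preadditive C] {g' : B ⟶ ∐ D} {Z' : Set X} (hg : FactorsThroughSubcoproduct g Z)
    (hg' : FactorsThroughSubcoproduct g' Z') : FactorsThroughSubcoproduct (g + g') (Z ∪ Z') := by
  obtain ⟨h, hh⟩ := hg.mono Set.subset_union_left
  obtain ⟨h', hh'⟩ := hg'.mono Set.subset_union_right
  exact ⟨h + h', by rw [Preadditive.add_comp, hh, hh']⟩

lemma of_ι_comp {ι : Type v} {B : ι → C} {g : ∐ B ⟶ ∐ D} {Z : ι → Set X}
    (hg : ∀ i, FactorsThroughSubcoproduct (Sigma.ι B i ≫ g) (Z i)) :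
    FactorsThroughSubcoproduct g (⋃ i, Z i) := by
  choose h hh using fun i => (hg i).mono (Set.subset_iUnion Z i)
  exact ⟨Sigma.desc h, by ext i; simp [hh]⟩

end FactorsThroughSubcoproduct

end Subcoproduct

namespace WeaklyGen

variable [HasColimits C] {κ : Cardinal.{v}}

lemma of_epi [HasZeroMorphisms C] {B B' : C} (p : B ⟶ B') [Epi p] (hB : WeaklyGen κ B) :
    WeaklyGen κ B' := fun X D g => by
  obtain ⟨Z, hZ, hpg⟩ := hB X D (p ≫ g)
  exact ⟨Z, hZ, FactorsThroughSubcoproduct.of_epi_comp p hpg⟩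

lemma of_shortExact [Abelian C] (hκ : Cardinal.aleph0 ≤ κ) {S : ShortComplex C}
    (hS : S.ShortExact) (h₁ : WeaklyGen κ S.X₁) (h₃ : WeaklyGen κ S.X₃) : WeaklyGen κ S.X₂ :=
  fun X D u => by
  obtain ⟨Z₁, hZ₁, hfu⟩ := h₁ X D (S.f ≫ u)
  set u₁ := u ≫ subcoproductπ D Z₁ ≫ subcoproductι D Z₁
  have hu₁ : FactorsThroughSubcoproduct u₁ Z₁ := ⟨u ≫ subcoproductπ D Z₁, Category.assoc _ _ _⟩
  have hvanish : S.f ≫ (u - u₁) = 0 := by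
    rw [Preadditive.comp_sub, ← Category.assoc, (factorsThroughSubcoproduct_iff _ _).mp hfu,
      sub_self]
  have := hS.epi_g
  obtain ⟨v, hv⟩ := hS.exact.desc' (u - u₁) hvanish
  obtain ⟨Z₃, hZ₃, hv₃⟩ := h₃ X D v
  refine ⟨Z₁ ∪ Z₃, (Cardinal.mk_union_le _ _).trans_lt (Cardinal.add_lt_of_lt hκ hZ₁ hZ₃), ?_⟩
  have hu : u = u₁ + S.g ≫ v := by rw [hv, add_sub_cancel]
  exact hu ▸ hu₁.add (FactorsThroughSubcoproduct.comp S.g hv₃)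

lemma sigma (hκ : κ.IsRegular) {ι : Type v} (hι : Cardinal.mk ι < κ) {B : ι → C}
    (hB : ∀ i, WeaklyGen κ (B i)) : WeaklyGen κ (∐ B) := fun X D g => by
  choose Z hZ hg using fun i => hB i X D (Sigma.ι B i ≫ g)
  exact ⟨⋃ i, Z i, (Cardinal.card_iUnion_lt_iff_forall_of_isRegular hκ hι).mpr hZ,
    FactorsThroughSubcoproduct.of_ι_comp hg⟩

end WeaklyGen

/-- in a cocomplete abelian category `C`, the class of weakly
`λ`-generated objects is closed under quotient objects, extensions, and
coproducts of fewer than `λ` objects, for `λ` a regular cardinal. -/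
theorem statement15 [Abelian C] [HasColimits C]
    (κ : Cardinal.{v}) (hκ : κ.IsRegular) :
    -- closed under quotient objects
    (∀ (B B' : C) (p : B ⟶ B'), Epi p → WeaklyGen κ B → WeaklyGen κ B') ∧
    -- closed under extensions
    (∀ S : ShortComplex C, S.ShortExact →
      WeaklyGen κ S.X₁ → WeaklyGen κ S.X₃ → WeaklyGen κ S.X₂) ∧
    -- closed under coproducts of fewer than `κ` objects
    (∀ (ι : Type v), Cardinal.mk ι < κ → ∀ B : ι → C,
      (∀ i, WeaklyGen κ (B i)) → WeaklyGen κ (∐ B)) :=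
  ⟨fun _ _ p _ hB => hB.of_epi p,
    fun _ hS => WeaklyGen.of_shortExact hκ.aleph0_le hS,
    fun _ hι _ => WeaklyGen.sigma hκ hι⟩
end
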